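/- Let E₁, E₂, E₃ be three pairwise-disjoint perfect matchings on V, |V| = 2n with 6 ≤ n ≤ 7, such that not all three pairwise unions (V, Eᵢ ∪ Eⱼ) are connected (i.e., the colored graph is not maximally single-trace). Assume additionally the flip lemma: whenever a component C of (V, E₁ ∪ E₂) and a component C′ of (V, E₁ ∪ E₃) share at least 3 edges of E₁, there is a perfect matching M′ differing from E₁ in exactly two edges with total component count F(M′) = F(E₁) + 1. Then there exists a perfect matching M with F₀₁ + F₀₂ + F₀₃ ≥ n + 4 > 3n/2. -/

import Mathlib

/-- A perfect matching on `V`, encoded as a fixed-point-free involution. -/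
def IsPM {V : Type*} (M : V → V) : Prop :=
  Function.Involutive M ∧ ∀ v, M v ≠ v

/-- The simple graph underlying the (multi)graph whose edges are those of the
two matchings `M` and `E`. -/
def unionGraph {V : Type*} (M E : V → V) : SimpleGraph V where
  Adj a b := a ≠ b ∧ (M a = b ∨ M b = a ∨ E a = b ∨ E b = a)
  symm := by
    constructor
    intro a b h
    exact ⟨h.1.symm, by tauto⟩
  loopless := by
    constructor
    intro a h
    exact h.1 rfl

/-- The number of connected components (alternating cycles / faces) of the
union of the two matchings `M` and `E`. -/
noncomputable def numComp {V : Type*} (M E : V → V) : ℕ :=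
  Nat.card (unionGraph M E).ConnectedComponent

section Aux

open SimpleGraph

variable {V : Type*}

lemma unionGraph_comm (M E : V → V) : unionGraph M E = unionGraph E M := by
  ext a b
  simp only [unionGraph]
  tauto

lemma numComp_comm (M E : V → V) : numComp M E = numComp E M := by
  unfold numComp
  rw [unionGraph_comm]

lemma adj_unionGraph {A : V → V} (B : V → V) (hA : IsPM A) (v : V) :
    (unionGraph A B).Adj v (A v) :=
  ⟨Ne.symm (hA.2 v), Or.inl rfl⟩

lemma reach_self {A : V → V} (hA : IsPM A) {v w : V}
    (h : (unionGraph A A).Reachable v w) : w = v ∨ w = A v := by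
  rw [SimpleGraph.reachable_iff_reflTransGen] at h
  induction h with
  | refl => exact Or.inl rfl
  | tail _ hadj ih =>
    rename_i b c _
    obtain ⟨hne, hor⟩ := hadj
    have hc : c = A b := by
      rcases hor with h | h | h | h
      · exact h.symm
      · have := congrArg A h
        rwa [hA.1] at this
      · exact h.symm
      · have := congrArg A h
        rwa [hA.1] at this
    rcases ih with rfl | rfl
    · exact Or.inr hc
    · rw [hc, hA.1]
      exact Or.inl rfl

lemma two_mul_card_image {X : Type*} [DecidableEq X] [Fintype V] {A : V → V} (hA : IsPM A)
    (f : V → X) (hf : ∀ v w : V, f w = f v ↔ (w = v ∨ w = A v)) :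
    2 * (Finset.univ.image f).card = Fintype.card V := by
  classical
  rw [← Finset.card_univ (α := V), Finset.card_eq_sum_card_image f Finset.univ]
  rw [Finset.sum_congr rfl (fun b hb => ?_), Finset.sum_const, smul_eq_mul, mul_comm]
  obtain ⟨v, -, rfl⟩ := Finset.mem_image.mp hb
  have hfib : (Finset.univ.filter fun w => f w = f v) = {v, A v} := by
    ext w
    simp only [Finset.mem_filter, Finset.mem_univ, true_and, Finset.mem_insert,
      Finset.mem_singleton]
    exact hf v w
  rw [hfib, Finset.card_insert_of_notMem (by simp [Ne.symm (hA.2 v)]),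
    Finset.card_singleton]

lemma numComp_self [Fintype V] {A : V → V} (hA : IsPM A) :
    2 * numComp A A = Fintype.card V := by
  classical
  have hFin : Fintype (unionGraph A A).ConnectedComponent := Fintype.ofFinite _
  have hmk : ∀ v w : V, (unionGraph A A).connectedComponentMk w =
      (unionGraph A A).connectedComponentMk v ↔ (w = v ∨ w = A v) := by
    intro v w
    rw [SimpleGraph.ConnectedComponent.eq]
    constructor
    · intro h
      rcases reach_self hA h.symm with h' | h'
      · exact Or.inl h'
      · exact Or.inr h'
    · rintro (rfl | rfl)
      · exact SimpleGraph.Reachable.refl _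
      · exact ((adj_unionGraph A hA v).reachable).symm
  have himg : (Finset.univ.image (unionGraph A A).connectedComponentMk) =
      (Finset.univ : Finset (unionGraph A A).ConnectedComponent) := by
    ext c
    simp only [Finset.mem_image, Finset.mem_univ, true_and, iff_true]
    exact c.exists_rep
  have := two_mul_card_image hA (unionGraph A A).connectedComponentMk hmk
  rw [himg, Finset.card_univ, ← Nat.card_eq_fintype_card] at this
  exact this

lemma key [Fintype V] {A B C : V → V} (hA : IsPM A)
    (hcard : 12 ≤ Fintype.card V) (hAB : numComp A B = 2) (hAC : numComp A C = 1) :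
    ∃ (K : (unionGraph A B).ConnectedComponent) (K' : (unionGraph A C).ConnectedComponent),
      3 ≤ Nat.card {s : Sym2 V | (∃ v, s = s(v, A v)) ∧
          ∀ x ∈ s, x ∈ K.supp ∩ K'.supp} := by
  classical
  have hNe : Nonempty V := Fintype.card_pos_iff.mp (by omega)
  obtain ⟨v0⟩ := hNe
  set K' := (unionGraph A C).connectedComponentMk v0 with hK'def
  have hsub : Subsingleton (unionGraph A C).ConnectedComponent := by
    have := hAC
    rw [numComp] at this
    exact (Nat.card_eq_one_iff_unique.mp this).1
  have hK' : ∀ x : V, x ∈ K'.supp := fun x =>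
    (SimpleGraph.ConnectedComponent.mem_supp_iff _ _).mpr (Subsingleton.elim _ _)
  set f : V → Sym2 V := fun v => s(v, A v) with hfdef
  have hf : ∀ v w : V, f w = f v ↔ (w = v ∨ w = A v) := by
    intro v w
    simp only [hfdef, Sym2.eq_iff]
    constructor
    · rintro (⟨h, -⟩ | ⟨h, -⟩)
      · exact Or.inl h
      · exact Or.inr h
    · rintro (rfl | rfl)
      · exact Or.inl ⟨rfl, rfl⟩
      · exact Or.inr ⟨rfl, hA.1 v⟩
  have hT : 2 * (Finset.univ.image f).card = Fintype.card V := two_mul_card_image hA f hf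
  set T := Finset.univ.image f with hTdef
  have hFinB : Fintype (unionGraph A B).ConnectedComponent := Fintype.ofFinite _
  have hcard2 : (Finset.univ : Finset (unionGraph A B).ConnectedComponent).card = 2 := by
    rw [Finset.card_univ, ← Nat.card_eq_fintype_card]
    exact hAB
  set g : Sym2 V → (unionGraph A B).ConnectedComponent :=
    fun s => (unionGraph A B).connectedComponentMk s.out.1 with hgdef
  obtain ⟨K, -, hK⟩ := Finset.exists_lt_card_fiber_of_mul_lt_card_of_maps_to
      (f := g) (s := T) (t := Finset.univ) (n := 2) (fun a _ => Finset.mem_univ _)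
      (by rw [hcard2]; omega)
  refine ⟨K, K', ?_⟩
  have hsubset : ↑(T.filter fun s => g s = K) ⊆
      {s : Sym2 V | (∃ v, s = s(v, A v)) ∧ ∀ x ∈ s, x ∈ K.supp ∩ K'.supp} := by
    intro s hs
    simp only [Finset.coe_filter, Set.mem_setOf_eq] at hs
    obtain ⟨hsT, hgs⟩ := hs
    obtain ⟨v, -, rfl⟩ := Finset.mem_image.mp hsT
    refine ⟨⟨v, rfl⟩, ?_⟩
    intro x hx
    refine ⟨?_, hK' x⟩
    have hmkeq : (unionGraph A B).connectedComponentMk v =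
        (unionGraph A B).connectedComponentMk (A v) :=
      SimpleGraph.ConnectedComponent.eq.mpr (adj_unionGraph B hA v).reachable
    have hout := Sym2.out_fst_mem (f v)
    rw [show f v = s(v, A v) from rfl] at hout hx
    simp only [Sym2.mem_iff] at hout hx
    rw [SimpleGraph.ConnectedComponent.mem_supp_iff]
    rw [hgdef] at hgs
    simp only at hgs
    rcases hx with rfl | rfl <;> rcases hout with h | h <;>
      rw [← hgs] <;> rw [h] <;> first | rfl | exact hmkeq | exact hmkeq.symm
  calc 3 ≤ (T.filter fun s => g s = K).card := hK
    _ = (↑(T.filter fun s => g s = K) : Set (Sym2 V)).ncard :=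
        (Set.ncard_coe_finset _).symm
    _ ≤ {s : Sym2 V | (∃ v, s = s(v, A v)) ∧
          ∀ x ∈ s, x ∈ K.supp ∩ K'.supp}.ncard :=
        Set.ncard_le_ncard hsubset (Set.toFinite _)
    _ = Nat.card {s : Sym2 V | (∃ v, s = s(v, A v)) ∧
          ∀ x ∈ s, x ∈ K.supp ∩ K'.supp} := (Nat.card_coe_set_eq _).symm

lemma numComp_pos [Fintype V] [Nonempty V] (M E : V → V) : 1 ≤ numComp M E := by
  rw [numComp]
  have : Nonempty (unionGraph M E).ConnectedComponent :=
    ⟨(unionGraph M E).connectedComponentMk (Classical.arbitrary V)⟩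
  exact Nat.card_pos

end Aux

/-- Lemma 3: for three pairwise-disjoint perfect matchings on `2n` vertices,
`6 ≤ n ≤ 7`, not maximally single-trace, and assuming the flip lemma as a
hypothesis, some perfect matching `M` achieves
`F₀₁ + F₀₂ + F₀₃ ≥ n + 4 > 3n/2`. -/
theorem stmt_14 {V : Type*} [Fintype V] (n : ℕ) (hn : 6 ≤ n) (hn7 : n ≤ 7)
    (hV : Fintype.card V = 2 * n)
    (E₁ E₂ E₃ : V → V) (h₁ : IsPM E₁) (h₂ : IsPM E₂) (h₃ : IsPM E₃)
    (hd12 : ∀ v, E₁ v ≠ E₂ v) (hd13 : ∀ v, E₁ v ≠ E₃ v) (hd23 : ∀ v, E₂ v ≠ E₃ v)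
    (hnotmst : ¬ (numComp E₁ E₂ = 1 ∧ numComp E₁ E₃ = 1 ∧ numComp E₂ E₃ = 1))
    (hflip : ∀ A B C : V → V, IsPM A → IsPM B → IsPM C →
      (∀ v, A v ≠ B v) → (∀ v, A v ≠ C v) → (∀ v, B v ≠ C v) →
      ∀ (K : (unionGraph A B).ConnectedComponent)
        (K' : (unionGraph A C).ConnectedComponent),
        3 ≤ Nat.card {s : Sym2 V | (∃ v, s = s(v, A v)) ∧
              ∀ x ∈ s, x ∈ K.supp ∩ K'.supp} →
        ∃ M' : V → V, IsPM M' ∧ {v : V | M' v ≠ A v}.ncard = 4 ∧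
          numComp M' A + numComp M' B + numComp M' C =
            numComp A A + numComp A B + numComp A C + 1) :
    ∃ M : V → V, IsPM M ∧
      n + 4 ≤ numComp M E₁ + numComp M E₂ + numComp M E₃ ∧
      ((n : ℚ) + 4 > 3 * n / 2) := by
  have hrat : ((n : ℚ) + 4 > 3 * n / 2) := by
    have : (n : ℚ) ≤ 7 := by exact_mod_cast hn7
    linarith
  have hNe : Nonempty V := Fintype.card_pos_iff.mp (by omega)
  have hs1 : numComp E₁ E₁ = n := by have := numComp_self h₁; omega
  have hs2 : numComp E₂ E₂ = n := by have := numComp_self h₂; omega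
  have hs3 : numComp E₃ E₃ = n := by have := numComp_self h₃; omega
  set a := numComp E₁ E₂ with ha
  set b := numComp E₁ E₃ with hb
  set c := numComp E₂ E₃ with hc
  have ha1 : 1 ≤ a := numComp_pos E₁ E₂
  have hb1 : 1 ≤ b := numComp_pos E₁ E₃
  have hc1 : 1 ≤ c := numComp_pos E₂ E₃
  have hcard12 : 12 ≤ Fintype.card V := by omega
  by_cases hab : 4 ≤ a + b
  · exact ⟨E₁, h₁, by omega, hrat⟩
  by_cases hac : 4 ≤ a + c
  · refine ⟨E₂, h₂, ?_, hrat⟩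
    rw [numComp_comm E₂ E₁]
    omega
  by_cases hbc : 4 ≤ b + c
  · refine ⟨E₃, h₃, ?_, hrat⟩
    rw [numComp_comm E₃ E₁, numComp_comm E₃ E₂]
    omega
  -- now exactly one of a,b,c equals 2, the rest 1
  have hcases : (a = 2 ∧ b = 1 ∧ c = 1) ∨ (b = 2 ∧ a = 1 ∧ c = 1) ∨
      (c = 2 ∧ a = 1 ∧ b = 1) := by
    rcases Nat.lt_or_ge a 2 with h | h <;> rcases Nat.lt_or_ge b 2 with h' | h' <;>
      rcases Nat.lt_or_ge c 2 with h'' | h'' <;> omega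
  rcases hcases with ⟨hA2, hB1, hC1⟩ | ⟨hB2, hA1, hC1⟩ | ⟨hC2, hA1, hB1⟩
  · obtain ⟨K, K', hKK'⟩ := key h₁ hcard12 hA2 hB1
    obtain ⟨M', hM', -, heq⟩ := hflip E₁ E₂ E₃ h₁ h₂ h₃ hd12 hd13 hd23 K K' hKK'
    exact ⟨M', hM', by omega, hrat⟩
  · obtain ⟨K, K', hKK'⟩ := key h₁ hcard12 hB2 hA1
    obtain ⟨M', hM', -, heq⟩ := hflip E₁ E₃ E₂ h₁ h₃ h₂ hd13 hd12
      (fun v => (hd23 v).symm) K K' hKK'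
    exact ⟨M', hM', by omega, hrat⟩
  · have hA1' : numComp E₂ E₁ = 1 := by rw [numComp_comm E₂ E₁]; omega
    obtain ⟨K, K', hKK'⟩ := key h₂ hcard12 hC2 hA1'
    obtain ⟨M', hM', -, heq⟩ := hflip E₂ E₃ E₁ h₂ h₃ h₁ hd23
      (fun v => (hd12 v).symm) (fun v => (hd13 v).symm) K K' hKK'
    exact ⟨M', hM', by omega, hrat⟩
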